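/- arXiv:1209.0812 — 7 statements merged into one kernel-verified Lean document; each statement's English description precedes it below -/
import Mathlib

section
/- Let p be a nonzero multivariate polynomial in MvPolynomial (Fin d) ℝ all of whose nonzero coefficients are positive, and let x : Fin d → ℝ((t)) be such that each xᵢ is nonzero with positive leading coefficient. Then the evaluation p(x₁,…,x_d) is a nonzero Laurent series with positive leading coefficient, and ord(p(x)) = min over α in the support of p of Σᵢ αᵢ · ord(xᵢ). Equivalently, −val(p(x)) equals the tropicalization of p evaluated at the negative valuations −val(xᵢ): subtraction-free polynomial expressions in elements of 𝕂₊ transform tropically under −val. -/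
/-!
Expanding `p(x) = ∑ α, c_α x^α`, each monomial has positive leading coefficient
`c_α ∏ lc(x i) ^ α i` at order `∑ α i • ord (x i)`, since leading terms of series multiply
as long as their product is nonzero. In a sum of series with positive leading coefficients
the terms of minimal order cannot cancel, so the sum has that minimal order and again a
positive leading coefficient.
-/

open HahnSeries

namespace HahnSeries

section Addition

variable {Γ R : Type*} [LinearOrder Γ] [Zero Γ]

theorem order_add_eq_min_of_coeff_ne_zero [AddMonoid R] {x y : R⟦Γ⟧}
    (h : (x + y).coeff (min x.order y.order) ≠ 0) :
    (x + y).order = min x.order y.order :=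
  le_antisymm (order_le_of_coeff_ne_zero h)
    (min_order_le_order_add (ne_zero_of_coeff_ne_zero h))

variable [AddMonoid R] [Preorder R] [AddLeftStrictMono R] {x y : R⟦Γ⟧}

theorem coeff_min_order_add_pos (hx : 0 < x.leadingCoeff) (hy : 0 < y.leadingCoeff) :
    0 < (x + y).coeff (min x.order y.order) := by
  rw [leadingCoeff_eq] at hx hy
  rcases lt_trichotomy x.order y.order with h | h | h
  · simpa [min_eq_left h.le, coeff_eq_zero_of_lt_order h] using hx
  · simpa [h] using add_pos (h ▸ hx) hy
  · simpa [min_eq_right h.le, coeff_eq_zero_of_lt_order h] using hy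

theorem order_add_of_leadingCoeff_pos (hx : 0 < x.leadingCoeff) (hy : 0 < y.leadingCoeff) :
    (x + y).order = min x.order y.order :=
  order_add_eq_min_of_coeff_ne_zero (coeff_min_order_add_pos hx hy).ne'

theorem leadingCoeff_add_pos (hx : 0 < x.leadingCoeff) (hy : 0 < y.leadingCoeff) :
    0 < (x + y).leadingCoeff := by
  rw [leadingCoeff_eq, order_add_of_leadingCoeff_pos hx hy]
  exact coeff_min_order_add_pos hx hy

end Addition

section Sum

variable {Γ R ι : Type*} [LinearOrder Γ] [Zero Γ] [AddCommMonoid R] [Preorder R]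
  [AddLeftStrictMono R] {s : Finset ι} {f : ι → R⟦Γ⟧}

theorem leadingCoeff_sum_pos (hs : s.Nonempty) (hf : ∀ i ∈ s, 0 < (f i).leadingCoeff) :
    0 < (∑ i ∈ s, f i).leadingCoeff := by
  induction hs using Finset.Nonempty.cons_induction with
  | singleton j => simpa using hf j
  | cons j t hj ht ih =>
    rw [Finset.sum_cons]
    exact leadingCoeff_add_pos (hf j (by simp))
      (ih fun i hi => hf i (Finset.mem_cons_of_mem hi))

theorem order_sum_of_leadingCoeff_pos (hs : s.Nonempty)
    (hf : ∀ i ∈ s, 0 < (f i).leadingCoeff) :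
    (∑ i ∈ s, f i).order = s.inf' hs fun i => (f i).order := by
  induction hs using Finset.Nonempty.cons_induction with
  | singleton j => simp
  | cons j t hj ht ih =>
    have ht_pos : ∀ i ∈ t, 0 < (f i).leadingCoeff := fun i hi =>
      hf i (Finset.mem_cons_of_mem hi)
    rw [Finset.sum_cons, Finset.inf'_cons ht,
      order_add_of_leadingCoeff_pos (hf j (by simp)) (leadingCoeff_sum_pos ht ht_pos),
      ih ht_pos]

end Sum

section Multiplication

variable {Γ R : Type*} [AddCommMonoid Γ] [LinearOrder Γ] [IsOrderedCancelAddMonoid Γ]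
  [Semiring R] [PartialOrder R] [IsStrictOrderedRing R]

theorem order_mul_of_leadingCoeff_pos {x y : R⟦Γ⟧} (hx : 0 < x.leadingCoeff)
    (hy : 0 < y.leadingCoeff) : (x * y).order = x.order + y.order :=
  order_mul_of_ne_zero (mul_pos hx hy).ne'

variable (Γ R) in
def posLeadingCoeffSubmonoid : Submonoid R⟦Γ⟧ where
  carrier := {x | 0 < x.leadingCoeff}
  one_mem' := by simp [leadingCoeff_one]
  mul_mem' {x y} hx hy := by
    simpa only [Set.mem_ofPred_eq, leadingCoeff_mul_of_ne_zero (mul_pos hx hy).ne'] using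
      mul_pos hx hy

theorem mem_posLeadingCoeffSubmonoid {x : R⟦Γ⟧} :
    x ∈ posLeadingCoeffSubmonoid Γ R ↔ 0 < x.leadingCoeff :=
  Iff.rfl

theorem order_pow_of_leadingCoeff_pos {x : R⟦Γ⟧} (hx : 0 < x.leadingCoeff) (n : ℕ) :
    (x ^ n).order = n • x.order := by
  induction n with
  | zero => simp
  | succ n ih =>
    have hxn : 0 < (x ^ n).leadingCoeff :=
      mem_posLeadingCoeffSubmonoid.mp (pow_mem (mem_posLeadingCoeffSubmonoid.mpr hx) n)
    rw [pow_succ, order_mul_of_leadingCoeff_pos hxn hx, ih, succ_nsmul]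

end Multiplication

section CommMultiplication

variable {Γ R ι : Type*} [AddCommMonoid Γ] [LinearOrder Γ] [IsOrderedCancelAddMonoid Γ]
  [CommSemiring R] [PartialOrder R] [IsStrictOrderedRing R]

theorem order_prod_of_leadingCoeff_pos {s : Finset ι} {f : ι → R⟦Γ⟧}
    (hf : ∀ i ∈ s, 0 < (f i).leadingCoeff) :
    (∏ i ∈ s, f i).order = ∑ i ∈ s, (f i).order := by
  induction s using Finset.cons_induction with
  | empty => simp
  | cons j t hj ih =>
    have ht_pos : ∀ i ∈ t, 0 < (f i).leadingCoeff := fun i hi =>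
      hf i (Finset.mem_cons_of_mem hi)
    have hprod : 0 < (∏ i ∈ t, f i).leadingCoeff :=
      mem_posLeadingCoeffSubmonoid.mp (prod_mem ht_pos)
    rw [Finset.prod_cons, Finset.sum_cons,
      order_mul_of_leadingCoeff_pos (hf j (by simp)) hprod, ih ht_pos]

variable [Fintype ι] {c : R} {x : ι → R⟦Γ⟧}

theorem leadingCoeff_C_mul_prod_pow_pos (hc : 0 < c) (hx : ∀ i, 0 < (x i).leadingCoeff)
    (α : ι →₀ ℕ) : 0 < (C c * ∏ i, x i ^ α i).leadingCoeff := by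
  have hC : C c ∈ posLeadingCoeffSubmonoid Γ R := by
    simpa [mem_posLeadingCoeffSubmonoid, C_apply] using hc
  exact mul_mem hC (prod_mem fun i _ => pow_mem (mem_posLeadingCoeffSubmonoid.mpr (hx i)) _)

theorem order_C_mul_prod_pow (hc : 0 < c) (hx : ∀ i, 0 < (x i).leadingCoeff) (α : ι →₀ ℕ) :
    (C c * ∏ i, x i ^ α i).order = ∑ i, α i • (x i).order := by
  have hpow : ∀ i ∈ Finset.univ, 0 < (x i ^ α i).leadingCoeff := fun i _ =>
    mem_posLeadingCoeffSubmonoid.mp (pow_mem (mem_posLeadingCoeffSubmonoid.mpr (hx i)) _)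
  rw [order_mul_of_leadingCoeff_pos (by simpa [C_apply] using hc)
      (mem_posLeadingCoeffSubmonoid.mp (prod_mem hpow)),
    order_C, zero_add, order_prod_of_leadingCoeff_pos hpow]
  exact Finset.sum_congr rfl fun i _ => order_pow_of_leadingCoeff_pos (hx i) _

end CommMultiplication

end HahnSeries

namespace MvPolynomial

variable {σ Γ R : Type*} [Fintype σ] [AddCommMonoid Γ] [LinearOrder Γ]
  [IsOrderedCancelAddMonoid Γ] [CommSemiring R]

theorem aeval_hahnSeries_eq_sum (p : MvPolynomial σ R) (x : σ → R⟦Γ⟧) :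
    aeval x p = ∑ α ∈ p.support, HahnSeries.C (p.coeff α) * ∏ i, x i ^ α i := by
  simp [aeval_def, eval₂_eq', HahnSeries.algebraMap_apply]

variable [PartialOrder R] [IsStrictOrderedRing R] {p : MvPolynomial σ R} {x : σ → R⟦Γ⟧}

theorem leadingCoeff_aeval_pos (hp : p ≠ 0) (hpos : ∀ α ∈ p.support, 0 < p.coeff α)
    (hx : ∀ i, 0 < (x i).leadingCoeff) : 0 < (aeval x p).leadingCoeff := by
  rw [aeval_hahnSeries_eq_sum]
  exact leadingCoeff_sum_pos (support_nonempty.mpr hp) fun α hα =>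
    leadingCoeff_C_mul_prod_pow_pos (hpos α hα) hx α

theorem order_aeval_of_leadingCoeff_pos (hp : p ≠ 0) (hpos : ∀ α ∈ p.support, 0 < p.coeff α)
    (hx : ∀ i, 0 < (x i).leadingCoeff) :
    (aeval x p).order = p.support.inf' (support_nonempty.mpr hp)
      fun α => ∑ i, α i • (x i).order := by
  rw [aeval_hahnSeries_eq_sum, order_sum_of_leadingCoeff_pos (support_nonempty.mpr hp)
    fun α hα => leadingCoeff_C_mul_prod_pow_pos (hpos α hα) hx α]
  exact Finset.inf'_congr _ rfl fun α hα => order_C_mul_prod_pow (hpos α hα) hx α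

end MvPolynomial

theorem laurent_eval_pos_poly_order_general {d : ℕ} (p : MvPolynomial (Fin d) ℝ) (hp : p ≠ 0)
    (hpos : ∀ α ∈ p.support, 0 < p.coeff α)
    (x : Fin d → LaurentSeries ℝ)
    (hx' : ∀ i, 0 < (x i).coeff (x i).order) :
    MvPolynomial.aeval x p ≠ 0 ∧
      0 < (MvPolynomial.aeval x p).coeff (MvPolynomial.aeval x p).order ∧
      (MvPolynomial.aeval x p).order =
        p.support.inf' (MvPolynomial.support_nonempty.mpr hp)
          (fun α => ∑ i, (α i : ℤ) * (x i).order) := by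
  have hx : ∀ i, 0 < (x i).leadingCoeff := fun i => leadingCoeff_eq (x := x i) ▸ hx' i
  -- `LaurentSeries ℝ` is an `ℝ`-algebra through `ℝ⟦X⟧`, not through the Hahn series instance.
  have hinst : (powerSeriesAlgebra ℤ ℝ : Algebra ℝ (LaurentSeries ℝ)) = HahnSeries.instAlgebra :=
    Algebra.algebra_ext _ _ fun r => by simp [algebraMap_apply', HahnSeries.algebraMap_apply]
  rw [hinst]
  have hlc := MvPolynomial.leadingCoeff_aeval_pos hp hpos hx
  refine ⟨leadingCoeff_ne_zero.mp hlc.ne', by rwa [← leadingCoeff_eq], ?_⟩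
  simpa only [nsmul_eq_mul] using MvPolynomial.order_aeval_of_leadingCoeff_pos hp hpos hx

/-- Subtraction-free polynomial expressions in elements of `𝕂₊` transform tropically
under `-val`: if `p` is a nonzero polynomial with positive coefficients and each `x i`
is a nonzero Laurent series with positive leading coefficient, then `p(x)` is nonzero
with positive leading coefficient, and its order is the minimum over monomials of
`∑ i, α i * ord (x i)`. -/
theorem laurent_eval_pos_poly_order {d : ℕ} (p : MvPolynomial (Fin d) ℝ) (hp : p ≠ 0)
    (hpos : ∀ α ∈ p.support, 0 < p.coeff α)
    (x : Fin d → LaurentSeries ℝ) (hx : ∀ i, x i ≠ 0)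
    (hx' : ∀ i, 0 < (x i).coeff (x i).order) :
    MvPolynomial.aeval x p ≠ 0 ∧
      0 < (MvPolynomial.aeval x p).coeff (MvPolynomial.aeval x p).order ∧
      (MvPolynomial.aeval x p).order =
        p.support.inf' (MvPolynomial.support_nonempty.mpr hp)
          (fun α => ∑ i, (α i : ℤ) * (x i).order) :=
  laurent_eval_pos_poly_order_general p hp hpos x hx'
end

section
/- Let p be a nonzero multivariate polynomial in MvPolynomial (Fin d) ℝ all of whose nonzero coefficients are positive, and let x ∈ ℝ^d. Then for every s ∈ ℝ the evaluation p(e^{s x₁}, …, e^{s x_d}) is strictly positive, and as s → ∞ the quantity (1/s)·log p(e^{s x₁}, …, e^{s x_d}) tends to max_{α ∈ supp(p)} Σᵢ αᵢ xᵢ. (That is, p(e^{s x}) is asymptotic to e^{s·p^t(x)} where p^t is the tropicalization of p; growth rates of positive polynomial expressions of coordinates are computed by their tropicalizations.) -/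
/-!
Substituting `e^{s x}` turns `p` into the exponential sum `∑ α, c α * e^{s ⟨α, x⟩}`. With positive
coefficients and `s ≥ 0` this sum lies between `c α₀ * e^{s M}` and `(∑ α, c α) * e^{s M}`, where
`α₀` attains the maximum `M`, so its logarithm is `s M + O(1)`.
-/

open Filter Topology Real

theorem tendsto_one_div_mul_of_le_of_le {g : ℝ → ℝ} {M a b : ℝ}
    (hlo : ∀ᶠ t in atTop, a + t * M ≤ g t) (hhi : ∀ᶠ t in atTop, g t ≤ b + t * M) :
    Tendsto (fun t => 1 / t * g t) atTop (𝓝 M) := by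
  have hlim : ∀ k : ℝ, Tendsto (fun t => k / t + M) atTop (𝓝 M) := fun k => by
    simpa using (tendsto_const_nhds.div_atTop tendsto_id).add_const M
  refine tendsto_of_tendsto_of_tendsto_of_le_of_le' (hlim a) (hlim b) ?_ ?_
  · filter_upwards [hlo, eventually_gt_atTop 0] with t ht hpos
    rw [div_add' _ _ _ hpos.ne', one_div_mul_eq_div, div_le_div_iff_of_pos_right hpos]
    linarith
  · filter_upwards [hhi, eventually_gt_atTop 0] with t ht hpos
    rw [div_add' _ _ _ hpos.ne', one_div_mul_eq_div, div_le_div_iff_of_pos_right hpos]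
    linarith

section ExpSum

variable {ι : Type*} {s : Finset ι} {c a : ι → ℝ}

theorem sum_mul_exp_pos (hs : s.Nonempty) (hc : ∀ i ∈ s, 0 < c i) (t : ℝ) :
    0 < ∑ i ∈ s, c i * exp (t * a i) :=
  Finset.sum_pos (fun i hi => mul_pos (hc i hi) (exp_pos _)) hs

theorem log_add_mul_le_log_sum_mul_exp (hc : ∀ i ∈ s, 0 < c i) {j : ι} (hj : j ∈ s) (t : ℝ) :
    log (c j) + t * a j ≤ log (∑ i ∈ s, c i * exp (t * a i)) := by
  rw [← log_exp (t * a j), ← log_mul (hc j hj).ne' (exp_ne_zero _)]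
  exact log_le_log (mul_pos (hc j hj) (exp_pos _)) <|
    Finset.single_le_sum (f := fun i => c i * exp (t * a i))
      (fun i hi => (mul_pos (hc i hi) (exp_pos _)).le) hj

theorem log_sum_mul_exp_le (hs : s.Nonempty) (hc : ∀ i ∈ s, 0 < c i) {t : ℝ} (ht : 0 ≤ t) :
    log (∑ i ∈ s, c i * exp (t * a i)) ≤ log (∑ i ∈ s, c i) + t * s.sup' hs a := by
  have hC : 0 < ∑ i ∈ s, c i := Finset.sum_pos hc hs
  rw [← log_exp (t * s.sup' hs a), ← log_mul hC.ne' (exp_ne_zero _)]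
  refine log_le_log (sum_mul_exp_pos hs hc t) ?_
  rw [Finset.sum_mul]
  refine Finset.sum_le_sum fun i hi => mul_le_mul_of_nonneg_left ?_ (hc i hi).le
  exact exp_le_exp.mpr (mul_le_mul_of_nonneg_left (Finset.le_sup' a hi) ht)

theorem tendsto_one_div_mul_log_sum_mul_exp (hs : s.Nonempty) (hc : ∀ i ∈ s, 0 < c i) :
    Tendsto (fun t => 1 / t * log (∑ i ∈ s, c i * exp (t * a i))) atTop (𝓝 (s.sup' hs a)) := by
  obtain ⟨j, hj, hjM⟩ := Finset.exists_mem_eq_sup' hs a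
  refine tendsto_one_div_mul_of_le_of_le (a := log (c j)) (b := log (∑ i ∈ s, c i)) ?_ ?_
  · exact Eventually.of_forall fun t => hjM ▸ log_add_mul_le_log_sum_mul_exp hc hj t
  · filter_upwards [eventually_ge_atTop 0] with t ht using log_sum_mul_exp_le hs hc ht

end ExpSum

theorem MvPolynomial.eval_exp_mul_eq_sum {σ : Type*} [Fintype σ] (p : MvPolynomial σ ℝ)
    (x : σ → ℝ) (t : ℝ) :
    eval (fun i => exp (t * x i)) p =
      ∑ α ∈ p.support, p.coeff α * exp (t * ∑ i, (α i : ℝ) * x i) := by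
  rw [eval_eq']
  refine Finset.sum_congr rfl fun α _ => ?_
  simp only [← exp_nat_mul, ← exp_sum, Finset.mul_sum]
  exact congrArg (_ * exp ·) (Finset.sum_congr rfl fun i _ => by ring)

/-- Growth rates of positive polynomial expressions of coordinates are computed by
their tropicalizations: if `p` is a nonzero polynomial with positive coefficients,
then `p (e^{s x₁}, …, e^{s x_d}) > 0` for all `s`, and
`(1/s) · log p (e^{s x})` tends to `max_{α ∈ supp p} ∑ i, α i * x i` as `s → ∞`. -/
theorem log_growth_rate_pos_poly {d : ℕ} (p : MvPolynomial (Fin d) ℝ) (hp : p ≠ 0)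
    (hpos : ∀ α ∈ p.support, 0 < p.coeff α) (x : Fin d → ℝ) :
    (∀ s : ℝ, 0 < MvPolynomial.eval (fun i => Real.exp (s * x i)) p) ∧
      Tendsto
        (fun s : ℝ =>
          (1 / s) * Real.log (MvPolynomial.eval (fun i => Real.exp (s * x i)) p))
        atTop
        (nhds (p.support.sup' (MvPolynomial.support_nonempty.mpr hp)
          (fun α => ∑ i, (α i : ℝ) * x i))) := by
  simp only [MvPolynomial.eval_exp_mul_eq_sum]
  have hne := MvPolynomial.support_nonempty.mpr hp
  exact ⟨sum_mul_exp_pos hne hpos, tendsto_one_div_mul_log_sum_mul_exp hne hpos⟩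
end

section
/- (Lemma 'independent of lift'.) Let m ≥ 1, let v : Fin m → (Fin m → ℝ((t))) be a family of vectors in 𝕂^m, and let v' : Fin m → (Fin m → ℝ((t))) be related to v by a lower-triangular unipotent change of basis over 𝕂: v'ᵢ = vᵢ + Σ_{j < i} c_{ij} • v_j for some coefficients c_{ij} ∈ ℝ((t)). Then there exists N ∈ ℕ such that for every λ : Fin m → ℤ with λ_j − λ_{j+1} ≥ N for all consecutive indices j, the 𝒪-submodule of 𝕂^m spanned by { t^{−λᵢ} • vᵢ : i ∈ Fin m } equals the 𝒪-submodule spanned by { t^{−λᵢ} • v'ᵢ : i ∈ Fin m }. -/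
/-! Rescaling by `t^{-λ}` turns the relation into `w'ᵢ = wᵢ + ∑_{j<i} t^{λⱼ-λᵢ} cᵢⱼ • wⱼ`.
Once every gap `λⱼ - λᵢ` (`j < i`) exceeds the pole orders of the `cᵢⱼ`, these coefficients
lie in `𝒪 = ℝ[[t]]`, so the rescaled families differ by a unitriangular matrix over `𝒪` and
therefore span the same `𝒪`-lattice. -/

open HahnSeries

theorem Submodule.span_range_eq_of_sub_mem_span_image_Iio {R M ι : Type*} [Ring R]
    [AddCommGroup M] [Module R M] [Preorder ι] [WellFoundedLT ι] {w w' : ι → M}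
    (h : ∀ i, w' i - w i ∈ Submodule.span R (w '' Set.Iio i)) :
    Submodule.span R (Set.range w) = Submodule.span R (Set.range w') := by
  apply le_antisymm
  · rw [Submodule.span_le, Set.range_subset_iff]
    intro i
    induction i using WellFoundedLT.induction with
    | _ i ih =>
      have hlower : Submodule.span R (w '' Set.Iio i) ≤ Submodule.span R (Set.range w') :=
        Submodule.span_le.2 (Set.image_subset_iff.2 ih)
      rw [SetLike.mem_coe, ← sub_sub_cancel (w' i) (w i)]
      exact sub_mem (Submodule.subset_span (Set.mem_range_self i)) (hlower (h i))
  · rw [Submodule.span_le, Set.range_subset_iff]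
    intro i
    rw [SetLike.mem_coe, ← add_sub_cancel (w i) (w' i)]
    exact add_mem (Submodule.subset_span (Set.mem_range_self i))
      (Submodule.span_mono (Set.image_subset_range w _) (h i))

theorem Fin.le_sub_of_lt_of_forall_le_sub_succ {m N : ℕ} {lam : Fin m → ℤ}
    (h : ∀ j : Fin m, ∀ hj : (j : ℕ) + 1 < m, (N : ℤ) ≤ lam j - lam ⟨j + 1, hj⟩)
    {i j : Fin m} (hji : j < i) : (N : ℤ) ≤ lam j - lam i := by
  obtain ⟨i, hi⟩ := i
  induction i with
  | zero => exact absurd (Fin.lt_def.1 hji) (Nat.not_lt_zero _)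
  | succ k ih =>
    have hstep : (N : ℤ) ≤ lam ⟨k, by omega⟩ - lam ⟨k + 1, hi⟩ := h ⟨k, by omega⟩ hi
    rcases Nat.lt_succ_iff_lt_or_eq.1 (Fin.lt_def.1 hji) with hjk | hjk
    · have := ih (by omega) (Fin.lt_def.2 hjk)
      omega
    · subst hjk
      simpa using hstep

namespace LaurentSeries

theorem exists_ofPowerSeries_eq_of_order_nonneg {R : Type*} [Semiring R] {f : LaurentSeries R}
    (hf : 0 ≤ f.order) : ∃ p : PowerSeries R, ofPowerSeries ℤ R p = f :=
  ⟨PowerSeries.X ^ f.order.toNat * f.powerSeriesPart, by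
    rw [map_mul, ofPowerSeries_X_pow, Int.toNat_of_nonneg hf, single_order_mul_powerSeriesPart]⟩

theorem smul_mem_of_order_nonneg {R M : Type*} [CommSemiring R] [AddCommMonoid M]
    [Module (LaurentSeries R) M] [Module (PowerSeries R) M]
    [IsScalarTower (PowerSeries R) (LaurentSeries R) M] {S : Submodule (PowerSeries R) M}
    {f : LaurentSeries R} (hf : 0 ≤ f.order) {x : M} (hx : x ∈ S) : f • x ∈ S := by
  obtain ⟨p, rfl⟩ := exists_ofPowerSeries_eq_of_order_nonneg hf
  rw [← coe_algebraMap, algebraMap_smul]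
  exact S.smul_mem p hx

theorem order_single_one_mul_nonneg {R : Type*} [Semiring R] {n : ℤ} {f : LaurentSeries R}
    (hn : -f.order ≤ n) : 0 ≤ (single n (1 : R) * f).order := by
  rcases eq_or_ne f 0 with rfl | hf
  · simp
  · rw [order_single_mul_of_isRegular isRegular_one hf]
    omega

theorem single_neg_smul_smul {R M : Type*} [CommSemiring R] [AddCommMonoid M]
    [Module (LaurentSeries R) M] (a b : ℤ) (c : LaurentSeries R) (x : M) :
    single (-a) (1 : R) • c • x = (single (b - a) (1 : R) * c) • single (-b) (1 : R) • x := by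
  rw [smul_smul, smul_smul, mul_right_comm, single_mul_single, one_mul,
    show b - a + -b = -a by ring]

theorem span_range_single_smul_eq_of_unitriangular {R M ι : Type*} [CommRing R]
    [AddCommGroup M] [Module (LaurentSeries R) M] [Module (PowerSeries R) M]
    [IsScalarTower (PowerSeries R) (LaurentSeries R) M] [Fintype ι] [LinearOrder ι]
    {v v' : ι → M} {c : ι → ι → LaurentSeries R}
    (hvv' : ∀ i, v' i = v i + ∑ j ∈ Finset.univ.filter (· < i), c i j • v j)
    {lam : ι → ℤ} (hlam : ∀ i j, j < i → -(c i j).order ≤ lam j - lam i) :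
    Submodule.span (PowerSeries R) (Set.range fun i => single (-lam i) (1 : R) • v i) =
      Submodule.span (PowerSeries R) (Set.range fun i => single (-lam i) (1 : R) • v' i) := by
  refine Submodule.span_range_eq_of_sub_mem_span_image_Iio fun i => ?_
  have hdiff : single (-lam i) (1 : R) • v' i - single (-lam i) (1 : R) • v i =
      ∑ j ∈ Finset.univ.filter (· < i),
        (single (lam j - lam i) (1 : R) * c i j) • single (-lam j) (1 : R) • v j := by
    rw [hvv' i, smul_add, add_sub_cancel_left, Finset.smul_sum]
    exact Finset.sum_congr rfl fun j _ => single_neg_smul_smul _ _ _ _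
  rw [hdiff]
  refine Submodule.sum_mem _ fun j hj => ?_
  have hji : j < i := (Finset.mem_filter.1 hj).2
  exact smul_mem_of_order_nonneg (order_single_one_mul_nonneg (hlam i j hji))
    (Submodule.subset_span (Set.mem_image_of_mem _ hji))

end LaurentSeries

theorem span_independent_of_lift_general {m : ℕ}
    (v v' : Fin m → (Fin m → LaurentSeries ℝ))
    (c : Fin m → Fin m → LaurentSeries ℝ)
    (hvv' : ∀ i : Fin m,
      v' i = v i + ∑ j ∈ Finset.univ.filter (fun j : Fin m => j < i), c i j • v j) :
    ∃ N : ℕ, ∀ lam : Fin m → ℤ,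
      (∀ j : Fin m, ∀ hj : (j : ℕ) + 1 < m, (N : ℤ) ≤ lam j - lam ⟨(j : ℕ) + 1, hj⟩) →
      Submodule.span (PowerSeries ℝ)
          (Set.range (fun i : Fin m =>
            (HahnSeries.single (-(lam i)) (1 : ℝ) : LaurentSeries ℝ) • v i)) =
        Submodule.span (PowerSeries ℝ)
          (Set.range (fun i : Fin m =>
            (HahnSeries.single (-(lam i)) (1 : ℝ) : LaurentSeries ℝ) • v' i)) := by
  let N := Finset.univ.sup fun p : Fin m × Fin m => (c p.1 p.2).order.natAbs
  refine ⟨N, fun lam hlam => ?_⟩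
  have hc : ∀ i j : Fin m, j < i → -(c i j).order ≤ lam j - lam i := fun i j hji => calc
    -(c i j).order ≤ (c i j).order.natAbs := by omega
    _ ≤ N := by exact_mod_cast Finset.le_sup (f := fun p : Fin m × Fin m =>
        (c p.1 p.2).order.natAbs) (Finset.mem_univ (i, j))
    _ ≤ lam j - lam i := Fin.le_sub_of_lt_of_forall_le_sub_succ hlam hji
  -- with `R` and `M` left implicit, unifying the `Pi` and `Module` scalar actions times out
  exact LaurentSeries.span_range_single_smul_eq_of_unitriangular (R := ℝ)
    (M := Fin m → LaurentSeries ℝ) hvv' hc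

/-- Lemma "independent of lift": if two families of vectors in `𝕂^m` differ by a
lower-triangular unipotent change of basis over `𝕂 = ℝ((t))`, then after rescaling
the `i`-th vector by `t^{-λ i}` for any sufficiently dominant `λ` (all consecutive
gaps at least `N`), the two families span the same `𝒪`-submodule of `𝕂^m`,
where `𝒪 = ℝ[[t]]`. -/
theorem span_independent_of_lift {m : ℕ} (hm : 1 ≤ m)
    (v v' : Fin m → (Fin m → LaurentSeries ℝ))
    (c : Fin m → Fin m → LaurentSeries ℝ)
    (hvv' : ∀ i : Fin m,
      v' i = v i + ∑ j ∈ Finset.univ.filter (fun j : Fin m => j < i), c i j • v j) :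
    ∃ N : ℕ, ∀ lam : Fin m → ℤ,
      (∀ j : Fin m, ∀ hj : (j : ℕ) + 1 < m, (N : ℤ) ≤ lam j - lam ⟨(j : ℕ) + 1, hj⟩) →
      Submodule.span (PowerSeries ℝ)
          (Set.range (fun i : Fin m =>
            (HahnSeries.single (-(lam i)) (1 : ℝ) : LaurentSeries ℝ) • v i)) =
        Submodule.span (PowerSeries ℝ)
          (Set.range (fun i : Fin m =>
            (HahnSeries.single (-(lam i)) (1 : ℝ) : LaurentSeries ℝ) • v' i)) :=
  span_independent_of_lift_general v v' c hvv'
end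

section
/- (Cartan decomposition for GL_m over ℝ((t)), existence.) Let m ≥ 1 and let g be an m×m matrix over ℝ((t)) with det g ≠ 0. Then there exist matrices a and b in GL_m(𝒪) and a dominant (weakly decreasing) function μ : Fin m → ℤ such that g = a · diag(t^{μ₀}, …, t^{μ_{m−1}}) · b. (This expresses that the double cosets G(𝒪)\G(𝕂)/G(𝒪) are represented by the points t^μ for dominant coweights μ.) -/
open HahnSeries

/-- A matrix over `𝕂 = ℝ((t))` lies in `GL_m(𝒪)`, where `𝒪 = ℝ[[t]]`, if all its
entries are power series and the order of its (nonzero) determinant is `0`, so that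
its determinant is a unit of `𝒪`. -/
def Matrix.memGLO {m : ℕ} (a : Matrix (Fin m) (Fin m) (LaurentSeries ℝ)) : Prop :=
  (∀ i j, a i j ∈ (HahnSeries.ofPowerSeries ℤ ℝ).range) ∧ a.det ≠ 0 ∧ a.det.order = 0

/-!
Smith normal form over the discrete valuation ring `F[[t]]`. An entry of minimal order divides
every other entry in `F[[t]]`, so after moving it to a corner, unipotent row and column operations
with coefficients in `F[[t]]` clear its row and column, and the complementary block (a Schur
complement) is decomposed by induction. The pivot is a unit of `F[[t]]` times `t^ord`, and a
final permutation sorts the exponents.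
-/

namespace LaurentSeries

variable {F : Type*} [Field F]

theorem mem_range_ofPowerSeries_iff {x : LaurentSeries F} :
    x ∈ (ofPowerSeries ℤ F).range ↔ 0 ≤ x.order := by
  constructor
  · rintro ⟨f, rfl⟩
    by_contra! hlt
    obtain hx | hx := eq_or_ne (ofPowerSeries ℤ F f) 0
    · simp [hx] at hlt
    · have := PowerSeries.coeff_coe f (ofPowerSeries ℤ F f).order
      rw [if_pos hlt] at this
      exact hx (coeff_order_eq_zero.mp this)
  · intro h
    exact ⟨PowerSeries.X ^ x.order.toNat * x.powerSeriesPart,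
      X_order_mul_powerSeriesPart (Int.toNat_of_nonneg h)⟩

theorem order_inv {x : LaurentSeries F} (hx : x ≠ 0) : x⁻¹.order = -x.order := by
  have := order_mul hx (inv_ne_zero hx)
  rw [mul_inv_cancel₀ hx, order_one] at this
  lia

theorem div_mem_range_ofPowerSeries {x y : LaurentSeries F} (hx : x ≠ 0)
    (h : y ≠ 0 → x.order ≤ y.order) : y / x ∈ (ofPowerSeries ℤ F).range := by
  obtain rfl | hy := eq_or_ne y 0
  · simp
  rw [mem_range_ofPowerSeries_iff, div_eq_mul_inv, order_mul hy (inv_ne_zero hx), order_inv hx]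
  linarith [h hy]

theorem exists_order_eq_zero_and_eq_mul_single {x : LaurentSeries F} (hx : x ≠ 0) :
    ∃ u : LaurentSeries F, u ≠ 0 ∧ u.order = 0 ∧ x = u * single x.order 1 := by
  have ht : (single (-x.order) 1 : LaurentSeries F) ≠ 0 := single_ne_zero one_ne_zero
  refine ⟨x * single (-x.order) 1, mul_ne_zero hx ht, ?_, ?_⟩
  · rw [order_mul hx ht, order_single one_ne_zero, add_neg_cancel]
  · rw [mul_assoc, single_mul_single, neg_add_cancel, one_mul, single_zero_one, mul_one]

end LaurentSeries

namespace Matrix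

theorem det_submatrix_equiv_equiv_eq_or_eq_neg {R ι κ : Type*} [CommRing R] [Fintype ι]
    [DecidableEq ι] [Fintype κ] [DecidableEq κ] (A : Matrix ι ι R) (e₁ e₂ : κ ≃ ι) :
    (A.submatrix e₁ e₂).det = A.det ∨ (A.submatrix e₁ e₂).det = -A.det := by
  have : A.submatrix e₁ e₂ = (A.submatrix e₁ e₁).submatrix id (e₂.trans e₁.symm) := by
    ext; simp
  rw [this, det_permute', det_submatrix_equiv_self]
  rcases Int.units_eq_one_or (Equiv.Perm.sign (e₂.trans e₁.symm)) with h | h <;> simp [h]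

theorem submatrix_mul_diagonal_mul {α l m n o l' n' : Type*} [Semiring α] [Fintype m]
    [DecidableEq m] [Fintype o] [DecidableEq o] (a : Matrix l m α) (d : m → α)
    (b : Matrix m n α) (e₁ : l' → l) (e : o ≃ m) (e₂ : n' → n) :
    (a * diagonal d * b).submatrix e₁ e₂ =
      a.submatrix e₁ e * diagonal (d ∘ e) * b.submatrix e e₂ := by
  rw [← submatrix_diagonal_equiv, submatrix_mul_equiv, submatrix_mul_equiv]

theorem fromBlocks_eq_of_ne_zero₂₂ {K ι : Type*} [Field K] [Fintype ι] [DecidableEq ι]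
    (A : Matrix ι ι K) (B : Matrix ι Unit K) (C : Matrix Unit ι K) {x : K} (hx : x ≠ 0) :
    fromBlocks A B C (diagonal fun _ => x) =
      fromBlocks 1 (x⁻¹ • B) 0 1 * fromBlocks (A - x⁻¹ • (B * C)) 0 0 (diagonal fun _ => x) *
        fromBlocks 1 0 (x⁻¹ • C) 1 := by
  simp only [fromBlocks_multiply, Matrix.mul_zero, Matrix.zero_mul, add_zero, zero_add,
    Matrix.one_mul, Matrix.mul_one]
  congr 1 <;> ext i j <;> simp [mul_apply, diagonal] <;> field_simp
  ring


variable {F : Type*} [Field F]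

theorem exists_pivot {ι κ : Type*} [Finite ι] [Finite κ] {g : Matrix ι κ (LaurentSeries F)}
    (hg : g ≠ 0) : ∃ i₀ j₀, g i₀ j₀ ≠ 0 ∧ ∀ i j, g i j / g i₀ j₀ ∈ (ofPowerSeries ℤ F).range := by
  obtain ⟨i, j, hij⟩ : ∃ i j, g i j ≠ 0 := by
    by_contra! h
    exact hg (Matrix.ext h)
  obtain ⟨⟨i₀, j₀⟩, hp, hmin⟩ := Set.exists_min_image {p : ι × κ | g p.1 p.2 ≠ 0}
    (fun p => (g p.1 p.2).order) (Set.toFinite _) ⟨(i, j), hij⟩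
  exact ⟨i₀, j₀, hp, fun i j =>
    LaurentSeries.div_mem_range_ofPowerSeries hp fun h => hmin (i, j) h⟩

variable {ι κ : Type*} [Fintype ι] [DecidableEq ι] [Fintype κ] [DecidableEq κ]

/-- `Matrix.memGLO` over an arbitrary field and finite index type. -/
def IsGLO (a : Matrix ι ι (LaurentSeries F)) : Prop :=
  (∀ i j, a i j ∈ (ofPowerSeries ℤ F).range) ∧ a.det ≠ 0 ∧ a.det.order = 0

theorem isGLO_one : (1 : Matrix ι ι (LaurentSeries F)).IsGLO := by
  refine ⟨fun i j => ?_, by simp, by simp⟩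
  rw [one_apply]
  split_ifs
  exacts [Subring.one_mem _, Subring.zero_mem _]

theorem IsGLO.mul {a b : Matrix ι ι (LaurentSeries F)} (ha : a.IsGLO) (hb : b.IsGLO) :
    (a * b).IsGLO := by
  refine ⟨fun i j => ?_, ?_, ?_⟩
  · exact Subring.sum_mem _ fun k _ => Subring.mul_mem _ (ha.1 i k) (hb.1 k j)
  · rw [det_mul]
    exact mul_ne_zero ha.2.1 hb.2.1
  · rw [det_mul, order_mul ha.2.1 hb.2.1, ha.2.2, hb.2.2, add_zero]

theorem IsGLO.submatrix {a : Matrix ι ι (LaurentSeries F)} (ha : a.IsGLO) (e₁ e₂ : κ ≃ ι) :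
    (a.submatrix e₁ e₂).IsGLO := by
  refine ⟨fun i j => ha.1 _ _, ?_⟩
  rcases det_submatrix_equiv_equiv_eq_or_eq_neg a e₁ e₂ with h | h <;> simp [h, ha.2]

theorem isGLO_fromBlocks_zero₂₁ {A : Matrix ι ι (LaurentSeries F)}
    {B : Matrix ι κ (LaurentSeries F)} {D : Matrix κ κ (LaurentSeries F)} (hA : A.IsGLO)
    (hB : ∀ i j, B i j ∈ (ofPowerSeries ℤ F).range) (hD : D.IsGLO) :
    (fromBlocks A B 0 D).IsGLO := by
  refine ⟨?_, ?_, ?_⟩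
  · rintro (i | i) (j | j) <;> simp [hA.1, hB, hD.1]
  · rw [det_fromBlocks_zero₂₁]
    exact mul_ne_zero hA.2.1 hD.2.1
  · rw [det_fromBlocks_zero₂₁, order_mul hA.2.1 hD.2.1, hA.2.2, hD.2.2, add_zero]

theorem isGLO_fromBlocks_zero₁₂ {A : Matrix ι ι (LaurentSeries F)}
    {C : Matrix κ ι (LaurentSeries F)} {D : Matrix κ κ (LaurentSeries F)} (hA : A.IsGLO)
    (hC : ∀ i j, C i j ∈ (ofPowerSeries ℤ F).range) (hD : D.IsGLO) :
    (fromBlocks A 0 C D).IsGLO := by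
  refine ⟨?_, ?_, ?_⟩
  · rintro (i | i) (j | j) <;> simp [hA.1, hC, hD.1]
  · rw [det_fromBlocks_zero₁₂]
    exact mul_ne_zero hA.2.1 hD.2.1
  · rw [det_fromBlocks_zero₁₂, order_mul hA.2.1 hD.2.1, hA.2.2, hD.2.2, add_zero]

theorem isGLO_diagonal_unique [Unique ι] {u : LaurentSeries F} (hu : u ≠ 0) (hu₀ : u.order = 0) :
    (diagonal fun _ : ι => u).IsGLO := by
  refine ⟨fun i j => ?_, by simpa using hu, by simpa using hu₀⟩
  rw [Subsingleton.elim i j, diagonal_apply_eq]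
  exact LaurentSeries.mem_range_ofPowerSeries_iff.mpr hu₀.ge

/-- `g` lies in the double coset `GL(𝒪) t^μ GL(𝒪)`. -/
def HasCartanDecomposition (g : Matrix ι ι (LaurentSeries F)) (μ : ι → ℤ) : Prop :=
  ∃ a b : Matrix ι ι (LaurentSeries F), a.IsGLO ∧ b.IsGLO ∧
    g = a * diagonal (fun i => HahnSeries.single (μ i) 1) * b

namespace HasCartanDecomposition

variable {g : Matrix ι ι (LaurentSeries F)} {μ : ι → ℤ}

theorem submatrix (h : g.HasCartanDecomposition μ) (e₁ e₂ : κ ≃ ι) :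
    (g.submatrix e₁ e₂).HasCartanDecomposition (μ ∘ e₁) := by
  obtain ⟨a, b, ha, hb, rfl⟩ := h
  exact ⟨_, _, ha.submatrix e₁ e₁, hb.submatrix e₁ e₂, submatrix_mul_diagonal_mul _ _ _ _ _ _⟩

theorem comp_perm (h : g.HasCartanDecomposition μ) (σ : Equiv.Perm ι) :
    g.HasCartanDecomposition (μ ∘ σ) := by
  obtain ⟨a, b, ha, hb, rfl⟩ := h
  refine ⟨_, _, ha.submatrix (Equiv.refl ι) σ, hb.submatrix σ (Equiv.refl ι), ?_⟩
  exact submatrix_mul_diagonal_mul a _ b id σ id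

theorem mul_mul {L U : Matrix ι ι (LaurentSeries F)} (hL : L.IsGLO)
    (h : g.HasCartanDecomposition μ) (hU : U.IsGLO) : (L * g * U).HasCartanDecomposition μ := by
  obtain ⟨a, b, ha, hb, rfl⟩ := h
  exact ⟨L * a, b * U, hL.mul ha, hb.mul hU, by simp only [Matrix.mul_assoc]⟩

theorem fromBlocks (h : g.HasCartanDecomposition μ) {x : LaurentSeries F} (hx : x ≠ 0) :
    (fromBlocks g 0 0 (diagonal fun _ : Unit => x)).HasCartanDecomposition
      (Sum.elim μ fun _ => x.order) := by
  obtain ⟨a, b, ha, hb, rfl⟩ := h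
  obtain ⟨u, hu, hu₀, hxu⟩ := LaurentSeries.exists_order_eq_zero_and_eq_mul_single hx
  refine ⟨fromBlocks a 0 0 (diagonal fun _ => u), fromBlocks b 0 0 1,
    isGLO_fromBlocks_zero₂₁ ha (by simp) (isGLO_diagonal_unique hu hu₀),
    isGLO_fromBlocks_zero₂₁ hb (by simp) isGLO_one, ?_⟩
  have hdiag : (fun i => HahnSeries.single (Sum.elim μ (fun _ : Unit => x.order) i) (1 : F)) =
      Sum.elim (fun i => HahnSeries.single (μ i) 1) fun _ => HahnSeries.single x.order 1 := by
    ext (i | i) <;> rfl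
  rw [hdiag, ← fromBlocks_diagonal, fromBlocks_multiply, fromBlocks_multiply]
  simp only [Matrix.mul_zero, Matrix.zero_mul, add_zero, zero_add, Matrix.mul_one,
    diagonal_mul_diagonal]
  rw [← hxu]

end HasCartanDecomposition

theorem exists_hasCartanDecomposition :
    ∀ {n : ℕ} (g : Matrix (Fin n) (Fin n) (LaurentSeries F)), g.det ≠ 0 →
      ∃ μ, g.HasCartanDecomposition μ
  | 0, g, _ => ⟨finZeroElim, 1, 1, isGLO_one, isGLO_one, Subsingleton.elim _ _⟩
  | n + 1, g, hg => by
    obtain ⟨i₀, j₀, hx, hdiv⟩ := exists_pivot (g := g) (by rintro rfl; simp at hg)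
    -- `e₁ i₀ = e₂ j₀ = inr ()`: the pivot becomes the `Unit × Unit` block.
    let e₁ : Fin (n + 1) ≃ Fin n ⊕ Unit := (finSuccEquiv' i₀).trans (Equiv.optionEquivSumPUnit _)
    let e₂ : Fin (n + 1) ≃ Fin n ⊕ Unit := (finSuccEquiv' j₀).trans (Equiv.optionEquivSumPUnit _)
    set G := g.submatrix e₁.symm e₂.symm
    have hG₂₂ : G.toBlocks₂₂ = diagonal fun _ => g i₀ j₀ := by
      ext ⟨⟩ ⟨⟩
      simp [G, e₁, e₂, toBlocks₂₂]
    have hG := fromBlocks_toBlocks G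
    rw [hG₂₂, fromBlocks_eq_of_ne_zero₂₂ _ _ _ hx] at hG
    set S := G.toBlocks₁₁ - (g i₀ j₀)⁻¹ • (G.toBlocks₁₂ * G.toBlocks₂₁)
    have hS : S.det ≠ 0 := by
      have hGdet : G.det ≠ 0 := by
        rcases det_submatrix_equiv_equiv_eq_or_eq_neg g e₁.symm e₂.symm with h | h <;>
          simp [G, h, hg]
      rw [← hG] at hGdet
      simp only [det_mul, det_fromBlocks_zero₂₁, det_fromBlocks_zero₁₂, det_one, one_mul,
        mul_one] at hGdet
      exact left_ne_zero_of_mul hGdet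
    obtain ⟨μ, hμ⟩ := exists_hasCartanDecomposition S hS
    have hL : (fromBlocks 1 ((g i₀ j₀)⁻¹ • G.toBlocks₁₂) 0 1).IsGLO := by
      refine isGLO_fromBlocks_zero₂₁ isGLO_one (fun i _ => ?_) isGLO_one
      simpa [G, e₁, e₂, toBlocks₁₂, inv_mul_eq_div] using hdiv _ _
    have hU : (fromBlocks 1 0 ((g i₀ j₀)⁻¹ • G.toBlocks₂₁) 1).IsGLO := by
      refine isGLO_fromBlocks_zero₁₂ isGLO_one (fun _ j => ?_) isGLO_one
      simpa [G, e₁, e₂, toBlocks₂₁, inv_mul_eq_div] using hdiv _ _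
    have := ((hμ.fromBlocks hx).mul_mul hL hU).submatrix e₁ e₂
    rw [hG] at this
    exact ⟨_, by simpa [G, submatrix_submatrix] using this⟩

end Matrix

theorem cartan_decomposition_exists_general {m : ℕ}
    (g : Matrix (Fin m) (Fin m) (LaurentSeries ℝ)) (hg : g.det ≠ 0) :
    ∃ (a b : Matrix (Fin m) (Fin m) (LaurentSeries ℝ)) (μ : Fin m → ℤ),
      a.memGLO ∧ b.memGLO ∧ Antitone μ ∧
      g = a * Matrix.diagonal
            (fun i => (HahnSeries.single (μ i) (1 : ℝ) : LaurentSeries ℝ)) * b := by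
  obtain ⟨μ, hμ⟩ := g.exists_hasCartanDecomposition hg
  let σ := Tuple.sort (OrderDual.toDual ∘ μ)
  obtain ⟨a, b, ha, hb, hab⟩ := hμ.comp_perm σ
  exact ⟨a, b, μ ∘ σ, ha, hb, monotone_toDual_comp_iff.mp (Tuple.monotone_sort _), hab⟩

/-- Cartan decomposition for `GL_m` over `ℝ((t))`, existence: any matrix `g` with
`det g ≠ 0` can be written as `g = a · diag(t^{μ₀}, …, t^{μ_{m-1}}) · b` with
`a, b ∈ GL_m(𝒪)` and `μ` dominant (weakly decreasing). -/
theorem cartan_decomposition_exists {m : ℕ} (hm : 1 ≤ m)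
    (g : Matrix (Fin m) (Fin m) (LaurentSeries ℝ)) (hg : g.det ≠ 0) :
    ∃ (a b : Matrix (Fin m) (Fin m) (LaurentSeries ℝ)) (μ : Fin m → ℤ),
      a.memGLO ∧ b.memGLO ∧ Antitone μ ∧
      g = a * Matrix.diagonal
            (fun i => (HahnSeries.single (μ i) (1 : ℝ) : LaurentSeries ℝ)) * b :=
  cartan_decomposition_exists_general g hg
end

section
/- (Antisymmetry of the distance: d(q,p) = −w₀·d(p,q).) Let m ≥ 1 and let g be an m×m matrix over ℝ((t)) admitting a Cartan decomposition g = a · diag(t^{μ₀}, …, t^{μ_{m−1}}) · b with a, b ∈ GL_m(𝒪) and μ : Fin m → ℤ dominant. Then g is invertible, and g⁻¹ admits a Cartan decomposition g⁻¹ = a' · diag(t^{μ'₀}, …, t^{μ'_{m−1}}) · b' with a', b' ∈ GL_m(𝒪), where μ' : Fin m → ℤ is the dominant function μ'ᵢ = −μ_{m−1−i} (i.e. μ' = −w₀ μ, the negative of μ composed with the order-reversing permutation of Fin m). -/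
open HahnSeries

/-!
Since `g⁻¹ = b⁻¹ · diag(t^{-μ}) · a⁻¹` and `GL_m(𝒪)` is a group containing the permutation
matrices, it suffices to reorder the diagonal: conjugating by the permutation matrix of the
longest Weyl element `w₀ = Fin.rev` turns `diag(t^{-μ})` into `diag(t^{-μ ∘ w₀})`, and `-μ ∘ w₀`
is dominant because `μ` is.
-/

theorem HahnSeries.order_inv {Γ K : Type*} [AddCommGroup Γ] [LinearOrder Γ]
    [IsOrderedAddMonoid Γ] [Field K] {x : HahnSeries Γ K} (hx : x ≠ 0) :
    x⁻¹.order = -x.order := by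
  have h := order_mul hx (inv_ne_zero hx)
  rw [mul_inv_cancel₀ hx, order_one] at h
  exact (neg_eq_of_add_eq_zero_right h.symm).symm

theorem HahnSeries.inv_mem_range_ofPowerSeries {K : Type*} [Field K] {x : LaurentSeries K}
    (hx : x ∈ (ofPowerSeries ℤ K).range) (hx0 : x ≠ 0) (hord : x.order = 0) :
    x⁻¹ ∈ (ofPowerSeries ℤ K).range := by
  obtain ⟨f, rfl⟩ := hx
  have hf : PowerSeries.constantCoeff f ≠ 0 := by
    have h := coeff_order_eq_zero.not.mpr hx0
    rwa [hord, ← Nat.cast_zero, ofPowerSeries_apply_coeff,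
      PowerSeries.coeff_zero_eq_constantCoeff_apply] at h
  obtain ⟨u, rfl⟩ := PowerSeries.isUnit_iff_constantCoeff.mpr hf.isUnit
  exact ⟨↑u⁻¹, map_units_inv _ u⟩

section MapMatrix

variable {n R S : Type*} [Fintype n] [DecidableEq n] [CommRing R] [CommRing S]
  {φ : R →+* S} {M : Matrix n n S}

theorem RingHom.exists_mapMatrix_eq (hM : ∀ i j, M i j ∈ φ.range) :
    ∃ A, φ.mapMatrix A = M :=
  ⟨fun i j => (hM i j).choose, by ext i j; exact (hM i j).choose_spec⟩

theorem Matrix.det_mem_range (hM : ∀ i j, M i j ∈ φ.range) : M.det ∈ φ.range := by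
  obtain ⟨A, rfl⟩ := φ.exists_mapMatrix_eq hM
  exact ⟨A.det, φ.map_det A⟩

theorem Matrix.adjugate_mem_range (hM : ∀ i j, M i j ∈ φ.range) (i j : n) :
    M.adjugate i j ∈ φ.range := by
  obtain ⟨A, rfl⟩ := φ.exists_mapMatrix_eq hM
  exact ⟨A.adjugate i j, congrFun (congrFun (φ.map_adjugate A) i) j⟩

end MapMatrix

section PermMatrix

variable {n R : Type*} [Fintype n] [DecidableEq n] [CommRing R]

theorem Matrix.permMatrix_inv_mul_permMatrix (σ : Equiv.Perm n) :
    σ⁻¹.permMatrix R * σ.permMatrix R = 1 := by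
  rw [← Matrix.permMatrix_mul, mul_inv_cancel, Matrix.permMatrix_one]

theorem Matrix.permMatrix_mul_diagonal_mul_permMatrix_inv (σ : Equiv.Perm n) (d : n → R) :
    σ.permMatrix R * Matrix.diagonal d * σ⁻¹.permMatrix R = Matrix.diagonal (d ∘ σ) := by
  rw [PEquiv.toMatrix_toPEquiv_mul, PEquiv.mul_toMatrix_toPEquiv, Matrix.submatrix_submatrix]
  exact Matrix.submatrix_diagonal_equiv d σ

end PermMatrix

namespace Matrix.memGLO

variable {m : ℕ} {a b : Matrix (Fin m) (Fin m) (LaurentSeries ℝ)}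

theorem mul (ha : a.memGLO) (hb : b.memGLO) : (a * b).memGLO := by
  obtain ⟨ha, ha0, ha_ord⟩ := ha
  obtain ⟨hb, hb0, hb_ord⟩ := hb
  refine ⟨fun i j => ?_, ?_, ?_⟩
  · rw [mul_apply]
    exact Subring.sum_mem _ fun k _ => Subring.mul_mem _ (ha i k) (hb k j)
  · rw [det_mul]; exact mul_ne_zero ha0 hb0
  · rw [det_mul, order_mul ha0 hb0, ha_ord, hb_ord, add_zero]

theorem isUnit (ha : a.memGLO) : IsUnit a :=
  (isUnit_iff_isUnit_det a).mpr (isUnit_iff_ne_zero.mpr ha.2.1)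

theorem inv (ha : a.memGLO) : a⁻¹.memGLO := by
  obtain ⟨ha, ha0, ha_ord⟩ := ha
  have hdet : a⁻¹.det = a.det⁻¹ := by rw [det_nonsing_inv, Ring.inverse_eq_inv']
  refine ⟨fun i j => ?_, ?_, ?_⟩
  · rw [inv_def, Ring.inverse_eq_inv']
    exact Subring.mul_mem _
      (inv_mem_range_ofPowerSeries (det_mem_range ha) ha0 ha_ord) (adjugate_mem_range ha i j)
  · rw [hdet]; exact inv_ne_zero ha0
  · rw [hdet, order_inv ha0, ha_ord, neg_zero]

end Matrix.memGLO

theorem Matrix.memGLO_permMatrix {m : ℕ} (σ : Equiv.Perm (Fin m)) :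
    (σ.permMatrix (LaurentSeries ℝ)).memGLO := by
  have hdet : (σ.permMatrix (LaurentSeries ℝ)).det = 1 ∨
      (σ.permMatrix (LaurentSeries ℝ)).det = -1 := by
    rcases Int.units_eq_one_or (Equiv.Perm.sign σ) with h | h <;> simp [det_permutation, h]
  refine ⟨fun i j => ?_, ?_, ?_⟩
  · simp only [Equiv.Perm.permMatrix, PEquiv.toMatrix_apply, Equiv.toPEquiv_apply,
      Option.mem_def, Option.some.injEq]
    split_ifs
    exacts [Subring.one_mem _, Subring.zero_mem _]
  · rcases hdet with h | h <;> simp [h]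
  · rcases hdet with h | h <;> simp [h]

section DiagonalSingle

variable {n Γ R : Type*} [Fintype n] [DecidableEq n] [AddCommGroup Γ] [LinearOrder Γ]
  [IsOrderedAddMonoid Γ] [CommRing R] (μ : n → Γ)

theorem Matrix.diagonal_single_mul_diagonal_single_neg :
    (diagonal fun i => HahnSeries.single (μ i) (1 : R)) *
      diagonal (fun i => HahnSeries.single (-μ i) 1) = 1 := by
  rw [diagonal_mul_diagonal, ← diagonal_one]
  congr 1
  funext i
  rw [single_mul_single, add_neg_cancel, mul_one, single_zero_one]

theorem Matrix.inv_diagonal_single :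
    (diagonal fun i => HahnSeries.single (μ i) (1 : R))⁻¹ =
      diagonal fun i => HahnSeries.single (-μ i) 1 :=
  inv_eq_right_inv (diagonal_single_mul_diagonal_single_neg μ)

theorem Matrix.isUnit_diagonal_single :
    IsUnit (diagonal fun i => HahnSeries.single (μ i) (1 : R)) :=
  (isUnit_iff_isUnit_det _).mpr
    (isUnit_det_of_right_inverse (diagonal_single_mul_diagonal_single_neg μ))

end DiagonalSingle

theorem cartan_decomposition_inverse_general {m : ℕ}
    (g : Matrix (Fin m) (Fin m) (LaurentSeries ℝ))
    (a b : Matrix (Fin m) (Fin m) (LaurentSeries ℝ)) (μ : Fin m → ℤ)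
    (ha : a.memGLO) (hb : b.memGLO) (hμ : Antitone μ)
    (hg : g = a * Matrix.diagonal
            (fun i => (HahnSeries.single (μ i) (1 : ℝ) : LaurentSeries ℝ)) * b) :
    IsUnit g ∧ Antitone (fun i : Fin m => -μ (Fin.rev i)) ∧
      ∃ (a' b' : Matrix (Fin m) (Fin m) (LaurentSeries ℝ)),
        a'.memGLO ∧ b'.memGLO ∧
        g⁻¹ = a' * Matrix.diagonal
            (fun i => (HahnSeries.single (-μ (Fin.rev i)) (1 : ℝ) : LaurentSeries ℝ)) * b' := by
  set w₀ : Equiv.Perm (Fin m) := Fin.revPerm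
  set P := w₀.permMatrix (LaurentSeries ℝ)
  set P' := w₀⁻¹.permMatrix (LaurentSeries ℝ)
  set D' := Matrix.diagonal fun i => (HahnSeries.single (-μ i) (1 : ℝ) : LaurentSeries ℝ)
  refine ⟨hg ▸ (ha.isUnit.mul (Matrix.isUnit_diagonal_single μ)).mul hb.isUnit,
    (hμ.comp Fin.rev_anti).neg, b⁻¹ * P', P * a⁻¹,
    hb.inv.mul (Matrix.memGLO_permMatrix _), (Matrix.memGLO_permMatrix _).mul ha.inv, ?_⟩
  have hP : P' * P = 1 := Matrix.permMatrix_inv_mul_permMatrix w₀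
  calc g⁻¹ = b⁻¹ * D' * a⁻¹ := by
        rw [hg, Matrix.mul_inv_rev, Matrix.mul_inv_rev, Matrix.inv_diagonal_single,
          Matrix.mul_assoc]
    _ = b⁻¹ * (P' * P) * D' * (P' * P) * a⁻¹ := by rw [hP, Matrix.mul_one, Matrix.mul_one]
    _ = b⁻¹ * P' * (P * D' * P') * (P * a⁻¹) := by simp only [Matrix.mul_assoc]
    _ = _ := by rw [Matrix.permMatrix_mul_diagonal_mul_permMatrix_inv]; rfl

/-- Antisymmetry of the coweight-valued distance, `d(q,p) = -w₀ · d(p,q)`: if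
`g = a · diag(t^μ) · b` with `a, b ∈ GL_m(𝒪)` and `μ` dominant, then `g` is invertible
and `g⁻¹ = a' · diag(t^{μ'}) · b'` with `a', b' ∈ GL_m(𝒪)`, where
`μ' i = -μ (Fin.rev i)` is again dominant. -/
theorem cartan_decomposition_inverse {m : ℕ} (hm : 1 ≤ m)
    (g : Matrix (Fin m) (Fin m) (LaurentSeries ℝ))
    (a b : Matrix (Fin m) (Fin m) (LaurentSeries ℝ)) (μ : Fin m → ℤ)
    (ha : a.memGLO) (hb : b.memGLO) (hμ : Antitone μ)
    (hg : g = a * Matrix.diagonal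
            (fun i => (HahnSeries.single (μ i) (1 : ℝ) : LaurentSeries ℝ)) * b) :
    IsUnit g ∧ Antitone (fun i : Fin m => -μ (Fin.rev i)) ∧
      ∃ (a' b' : Matrix (Fin m) (Fin m) (LaurentSeries ℝ)),
        a'.memGLO ∧ b'.memGLO ∧
        g⁻¹ = a' * Matrix.diagonal
            (fun i => (HahnSeries.single (-μ (Fin.rev i)) (1 : ℝ) : LaurentSeries ℝ)) * b' :=
  cartan_decomposition_inverse_general g a b μ ha hb hμ hg
end

section
/- (Triangle inequality for the coweight-valued distance, in the dominance order.) Let m ≥ 1 and let g, h be m×m matrices over ℝ((t)) with Cartan decompositions g = a₁ · diag(t^{μ}) · b₁, h = a₂ · diag(t^{ν}) · b₂, and g·h = a₃ · diag(t^{ρ}) · b₃, where all aᵢ, bᵢ ∈ GL_m(𝒪) and μ, ν, ρ : Fin m → ℤ are dominant. Then Σ_{i=0}^{m−1} ρᵢ = Σ_{i=0}^{m−1} μᵢ + Σ_{i=0}^{m−1} νᵢ, and for every k ≤ m, Σ_{i<k} ρᵢ ≤ Σ_{i<k} μᵢ + Σ_{i<k} νᵢ. (That is, ρ ≤ μ +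 ν in the dominance partial order on coweights of GL_m, in which λ ≥ ρ when λ − ρ has nonnegative partial sums and total sum zero.) -/
/-! A matrix with entries in `𝒪` can only raise the least order of the `k × k` minors of a matrix
it multiplies (Cauchy–Binet), so this least order is invariant under `GL_m(𝒪)` on both sides.
Since `diag(t^ρ) = (a₃⁻¹ a₁) · diag(t^μ) (b₁ a₂) diag(t^ν) · (b₂ b₃⁻¹)`, and every `k × k` minor of
`diag(t^μ) B diag(t^ν)` with `B` integral has order at least the sum of the `k` smallest entries
of `μ` plus that of `ν`, the last `k` entries of `ρ` sum to at least the last `k` of `μ` plus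
the last `k` of `ν`. Comparing orders of determinants gives `∑ ρ = ∑ μ + ∑ ν`, and subtracting
turns the bound on the last entries into the bound on the first ones. -/

open HahnSeries

open Finset Matrix

section SumsOverUpperSets

variable {ι M : Type*} [LinearOrder ι] [AddCommMonoid M] [LinearOrder M] [IsOrderedAddMonoid M]
  {f : ι → M} {U : Finset ι}

theorem Antitone.sum_le_sum_of_isUpperSet (hf : Antitone f) (hU : IsUpperSet (U : Set ι))
    {S : Finset ι} (hcard : #S = #U) : ∑ i ∈ U, f i ≤ ∑ i ∈ S, f i := by
  have hsep : ∀ x ∈ S \ U, ∀ y ∈ U \ S, f y ≤ f x := fun x hx y hy =>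
    hf (le_of_not_ge fun hyx => (mem_sdiff.1 hx).2 (hU hyx (mem_sdiff.1 hy).1))
  rw [← sum_inter_add_sum_sdiff U S, ← sum_inter_add_sum_sdiff S U, inter_comm]
  refine add_le_add_right ?_ _
  rcases (S \ U).eq_empty_or_nonempty with hempty | hnonempty
  · have : U \ S = ∅ := card_eq_zero.1 (by rw [← card_sdiff_comm hcard, hempty, card_empty])
    rw [hempty, this]
  obtain ⟨x₀, hx₀, hmin⟩ := exists_min_image _ f hnonempty
  calc ∑ i ∈ U \ S, f i ≤ #(U \ S) • f x₀ := sum_le_card_nsmul _ _ _ (hsep x₀ hx₀)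
    _ = #(S \ U) • f x₀ := by rw [card_sdiff_comm hcard.symm]
    _ ≤ ∑ i ∈ S \ U, f i := card_nsmul_le_sum _ _ _ hmin

theorem Antitone.sum_le_sum_comp_of_isUpperSet (hf : Antitone f) (hU : IsUpperSet (U : Set ι))
    {I : Fin #U → ι} (hI : Function.Injective I) : ∑ i ∈ U, f i ≤ ∑ j, f (I j) :=
  (hf.sum_le_sum_of_isUpperSet hU (S := univ.map ⟨I, hI⟩) (by simp)).trans_eq (sum_map _ _ _)

end SumsOverUpperSets

theorem Matrix.det_mul_eq_sum_prod_mul_det_submatrix {κ m R : Type*} [Fintype κ] [DecidableEq κ]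
    [Fintype m] [CommRing R] (A : Matrix κ m R) (B : Matrix m κ R) :
    (A * B).det = ∑ f : κ → m, (∏ i, A i (f i)) * (B.submatrix f id).det := by
  have hrows : A * B = Matrix.of fun i => ∑ l, A i l • B l := by
    ext i j
    simp [mul_apply, Finset.sum_apply]
  calc (A * B).det = detRowAlternating.toMultilinearMap fun i => ∑ l, A i l • B l := by
        rw [hrows]; rfl
    _ = ∑ f : κ → m, detRowAlternating.toMultilinearMap fun i => A i (f i) • B (f i) :=
        MultilinearMap.map_sum _ _
    _ = _ := by
        refine sum_congr rfl fun f _ => ?_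
        rw [MultilinearMap.map_smul_univ]
        rfl

namespace AddValuation

variable {R Γ₀ : Type*} [CommRing R] [LinearOrderedAddCommMonoidWithTop Γ₀] (v : AddValuation R Γ₀)
  {l m n : Type*} {k : ℕ} {c : Γ₀}

theorem map_prod {ι : Type*} (s : Finset ι) (f : ι → R) :
    v (∏ i ∈ s, f i) = ∑ i ∈ s, v (f i) := by
  induction s using Finset.cons_induction with
  | empty => simp [v.map_one]
  | cons a s ha ih => rw [prod_cons, sum_cons, v.map_mul, ih]

theorem map_det_nonneg [Fintype n] [DecidableEq n] {M : Matrix n n R}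
    (hM : ∀ i j, 0 ≤ v (M i j)) : 0 ≤ v M.det := by
  rw [det_apply]
  refine v.map_le_sum fun σ _ => ?_
  rcases Int.units_eq_one_or (Equiv.Perm.sign σ) with h | h <;>
    simp only [h, one_smul, Units.neg_smul, v.map_neg, v.map_prod] <;>
    exact sum_nonneg fun i _ => hM _ _

theorem map_mul_apply_nonneg [Fintype m] {a : Matrix l m R} {b : Matrix m n R}
    (ha : ∀ i j, 0 ≤ v (a i j)) (hb : ∀ i j, 0 ≤ v (b i j)) (i : l) (j : n) :
    0 ≤ v ((a * b) i j) :=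
  v.map_le_sum fun x _ => (v.map_mul _ _).symm ▸ add_nonneg (ha i x) (hb x j)

theorem map_inv_apply_nonneg {K : Type*} [Field K] (v : AddValuation K Γ₀) [Fintype n]
    [DecidableEq n] {a : Matrix n n K} (ha : ∀ i j, 0 ≤ v (a i j)) (hdet : v a.det = 0)
    (i j : n) : 0 ≤ v (a⁻¹ i j) := by
  have hinv : 0 ≤ v a.det⁻¹ := by
    rcases eq_or_ne a.det 0 with h | h
    · simp [h, v.map_zero]
    · have h1 : v a.det⁻¹ + v a.det = 0 := by rw [← v.map_mul, inv_mul_cancel₀ h, v.map_one]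
      rw [hdet, add_zero] at h1
      exact h1.ge
  have hadj : 0 ≤ v (a.adjugate i j) := by
    rw [adjugate_apply]
    refine v.map_det_nonneg fun x y => ?_
    rw [updateRow_apply]
    split_ifs
    · rw [Pi.single_apply]; split_ifs <;> simp [v.map_one, v.map_zero]
    · exact ha x y
  rw [Matrix.inv_def, Matrix.smul_apply, smul_eq_mul, Ring.inverse_eq_inv', v.map_mul]
  exact add_nonneg hinv hadj

def LeMinors (k : ℕ) (c : Γ₀) (M : Matrix m n R) : Prop :=
  ∀ (I : Fin k → m) (J : Fin k → n), c ≤ v (M.submatrix I J).det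

variable {v}

theorem leMinors_of_injective {M : Matrix m n R}
    (h : ∀ (I : Fin k → m) (J : Fin k → n), Function.Injective I → Function.Injective J →
      c ≤ v (M.submatrix I J).det) :
    v.LeMinors k c M := by
  intro I J
  by_cases hI : Function.Injective I
  · by_cases hJ : Function.Injective J
    · exact h I J hI hJ
    obtain ⟨x, y, hxy, hne⟩ := Function.not_injective_iff.1 hJ
    rw [det_zero_of_column_eq hne fun i => by simp [hxy], v.map_zero]
    exact le_top
  obtain ⟨x, y, hxy, hne⟩ := Function.not_injective_iff.1 hI
  rw [det_zero_of_row_eq hne (funext fun j => by simp [hxy]), v.map_zero]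
  exact le_top

theorem LeMinors.mul_left [Fintype m] {a : Matrix l m R} {M : Matrix m n R}
    (ha : ∀ i j, 0 ≤ v (a i j)) (hM : v.LeMinors k c M) : v.LeMinors k c (a * M) := by
  intro I J
  rw [submatrix_mul _ _ _ _ _ Function.bijective_id, det_mul_eq_sum_prod_mul_det_submatrix]
  refine v.map_le_sum fun f _ => ?_
  rw [v.map_mul, v.map_prod, submatrix_submatrix]
  exact le_add_of_nonneg_of_le (sum_nonneg fun i _ => ha _ _) (hM _ _)

theorem LeMinors.transpose {M : Matrix m n R} (hM : v.LeMinors k c M) : v.LeMinors k c Mᵀ :=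
  fun I J => by rw [← transpose_submatrix, det_transpose]; exact hM J I

theorem LeMinors.mul_right [Fintype n] {M : Matrix m n R} {b : Matrix n l R}
    (hb : ∀ i j, 0 ≤ v (b i j)) (hM : v.LeMinors k c M) : v.LeMinors k c (M * b) := by
  simpa using (hM.transpose.mul_left (a := bᵀ) fun i j => hb j i).transpose

variable (v)

theorem le_map_det_submatrix_diagonal_mul_mul_diagonal [Fintype m] [Fintype n] [DecidableEq m]
    [DecidableEq n] (d : m → R) (e : n → R) {B : Matrix m n R} (hB : ∀ i j, 0 ≤ v (B i j))
    (I : Fin k → m) (J : Fin k → n) :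
    ∑ i, v (d (I i)) + ∑ j, v (e (J j)) ≤ v ((diagonal d * B * diagonal e).submatrix I J).det := by
  have hsub : (diagonal d * B * diagonal e).submatrix I J
      = diagonal (d ∘ I) * B.submatrix I J * diagonal (e ∘ J) := by
    ext i j
    simp [diagonal_mul, mul_diagonal]
  rw [hsub, det_mul, det_mul, det_diagonal, det_diagonal, v.map_mul, v.map_mul, v.map_prod,
    v.map_prod, add_right_comm]
  exact le_add_of_nonneg_right (v.map_det_nonneg fun _ _ => hB _ _)

end AddValuation

namespace HahnSeries

variable {R : Type*} [CommRing R] [IsDomain R]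

theorem addVal_single {g : ℤ} {r : R} (hr : r ≠ 0) : addVal ℤ R (single g r) = g := by
  rw [addVal_apply, orderTop_single hr]

theorem addVal_ofPowerSeries_nonneg (f : PowerSeries R) :
    0 ≤ addVal ℤ R (ofPowerSeries ℤ R f) := by
  rw [addVal_apply, ofPowerSeries_apply, orderTop_embDomain]
  cases (toPowerSeries.symm f).orderTop with
  | top => exact le_top
  | coe n => exact WithTop.coe_le_coe.2 (Int.natCast_nonneg n)

end HahnSeries

section DiagonalMinors

variable {R ι : Type*} [CommRing R] [IsDomain R] [LinearOrder ι]

theorem leMinors_diagonal_single_mul_mul_diagonal_single [Fintype ι] {μ ν : ι → ℤ} (hμ : Antitone μ)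
    (hν : Antitone ν) {B : Matrix ι ι (LaurentSeries R)} (hB : ∀ i j, 0 ≤ addVal ℤ R (B i j))
    {U : Finset ι} (hU : IsUpperSet (U : Set ι)) :
    (addVal ℤ R).LeMinors #U ((∑ i ∈ U, μ i + ∑ i ∈ U, ν i : ℤ) : WithTop ℤ)
      (diagonal (fun i => HahnSeries.single (μ i) (1 : R)) * B *
        diagonal (fun i => HahnSeries.single (ν i) (1 : R))) := by
  refine AddValuation.leMinors_of_injective fun I J hI hJ => ?_
  refine le_trans ?_ ((addVal ℤ R).le_map_det_submatrix_diagonal_mul_mul_diagonal _ _ hB I J)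
  simp only [addVal_single one_ne_zero]
  exact_mod_cast add_le_add (hμ.sum_le_sum_comp_of_isUpperSet hU hI)
    (hν.sum_le_sum_comp_of_isUpperSet hU hJ)

theorem le_sum_of_leMinors_diagonal_single {ρ : ι → ℤ} {U : Finset ι} {c : WithTop ℤ}
    (hρ : (addVal ℤ R).LeMinors #U c (diagonal fun i => HahnSeries.single (ρ i) (1 : R))) :
    c ≤ ((∑ i ∈ U, ρ i : ℤ) : WithTop ℤ) := by
  let I := U.orderEmbOfFin rfl
  have hsum : ∑ j, ρ (I j) = ∑ i ∈ U, ρ i := by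
    conv_rhs => rw [← map_orderEmbOfFin_univ U rfl]
    exact (sum_map _ _ _).symm
  have h := hρ I I
  rw [← I.coe_toEmbedding, submatrix_diagonal_embedding, det_diagonal, (addVal ℤ R).map_prod] at h
  simpa [addVal_single one_ne_zero, ← hsum] using h

end DiagonalMinors

namespace Matrix.memGLO

variable {m : ℕ} {a : Matrix (Fin m) (Fin m) (LaurentSeries ℝ)}

theorem addVal_nonneg (ha : a.memGLO) (i j : Fin m) : 0 ≤ addVal ℤ ℝ (a i j) := by
  obtain ⟨f, hf⟩ := ha.1 i j
  rw [← hf]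
  exact addVal_ofPowerSeries_nonneg f

theorem addVal_det (ha : a.memGLO) : addVal ℤ ℝ a.det = 0 := by
  rw [addVal_apply_of_ne ha.2.1, ha.2.2]
  rfl

theorem addVal_inv_nonneg (ha : a.memGLO) (i j : Fin m) : 0 ≤ addVal ℤ ℝ (a⁻¹ i j) :=
  (addVal ℤ ℝ).map_inv_apply_nonneg ha.addVal_nonneg ha.addVal_det i j

theorem addVal_det_mul_diagonal_mul {b : Matrix (Fin m) (Fin m) (LaurentSeries ℝ)}
    (ha : a.memGLO) (hb : b.memGLO) (μ : Fin m → ℤ) :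
    addVal ℤ ℝ (a * diagonal (fun i => HahnSeries.single (μ i) (1 : ℝ)) * b).det =
      ((∑ i, μ i : ℤ) : WithTop ℤ) := by
  rw [det_mul, det_mul, det_diagonal, (addVal ℤ ℝ).map_mul, (addVal ℤ ℝ).map_mul,
    ha.addVal_det, hb.addVal_det, (addVal ℤ ℝ).map_prod]
  simp [addVal_single one_ne_zero]

end Matrix.memGLO

theorem cartan_triangle_inequality_general {m : ℕ}
    (g h : Matrix (Fin m) (Fin m) (LaurentSeries ℝ))
    (a₁ b₁ a₂ b₂ a₃ b₃ : Matrix (Fin m) (Fin m) (LaurentSeries ℝ))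
    (μ ν ρ : Fin m → ℤ)
    (ha₁ : a₁.memGLO) (hb₁ : b₁.memGLO) (ha₂ : a₂.memGLO) (hb₂ : b₂.memGLO)
    (ha₃ : a₃.memGLO) (hb₃ : b₃.memGLO)
    (hμ : Antitone μ) (hν : Antitone ν)
    (hg : g = a₁ * Matrix.diagonal
            (fun i => (HahnSeries.single (μ i) (1 : ℝ) : LaurentSeries ℝ)) * b₁)
    (hh : h = a₂ * Matrix.diagonal
            (fun i => (HahnSeries.single (ν i) (1 : ℝ) : LaurentSeries ℝ)) * b₂)
    (hgh : g * h = a₃ * Matrix.diagonal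
            (fun i => (HahnSeries.single (ρ i) (1 : ℝ) : LaurentSeries ℝ)) * b₃) :
    (∑ i, ρ i = ∑ i, μ i + ∑ i, ν i) ∧
      ∀ k : ℕ, k ≤ m →
        ∑ i ∈ Finset.univ.filter (fun i : Fin m => (i : ℕ) < k), ρ i ≤
          ∑ i ∈ Finset.univ.filter (fun i : Fin m => (i : ℕ) < k), μ i +
            ∑ i ∈ Finset.univ.filter (fun i : Fin m => (i : ℕ) < k), ν i := by
  have htotal : ∑ i, ρ i = ∑ i, μ i + ∑ i, ν i := by
    have hdet := congrArg (fun M => addVal ℤ ℝ M.det) hgh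
    simp only [det_mul g h, (addVal ℤ ℝ).map_mul] at hdet
    rw [hg, hh, ha₁.addVal_det_mul_diagonal_mul hb₁, ha₂.addVal_det_mul_diagonal_mul hb₂,
      ha₃.addVal_det_mul_diagonal_mul hb₃] at hdet
    exact_mod_cast hdet.symm
  refine ⟨htotal, fun k _ => ?_⟩
  set U := univ.filter fun i : Fin m => ¬ (i : ℕ) < k
  have hU : IsUpperSet (U : Set (Fin m)) := fun i j hij hi => by
    simp only [U, coe_filter, mem_univ, true_and, Set.mem_ofPred_eq, Fin.le_def] at hi hij ⊢
    omega
  have hρ : diagonal (fun i => HahnSeries.single (ρ i) (1 : ℝ)) = a₃⁻¹ * (a₁ *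
      (diagonal (fun i => HahnSeries.single (μ i) 1) * (b₁ * a₂) *
        diagonal (fun i => HahnSeries.single (ν i) 1)) * b₂) * b₃⁻¹ := by
    calc _ = a₃⁻¹ * (a₃ * diagonal (fun i => HahnSeries.single (ρ i) 1) * b₃) * b₃⁻¹ := by
          rw [Matrix.mul_assoc a₃, nonsing_inv_mul_cancel_left _ _ (isUnit_iff_ne_zero.2 ha₃.2.1),
            mul_nonsing_inv_cancel_right _ _ (isUnit_iff_ne_zero.2 hb₃.2.1)]
      _ = _ := by
          rw [← hgh, hg, hh]
          simp only [Matrix.mul_assoc]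
  have hminors := ((((leMinors_diagonal_single_mul_mul_diagonal_single hμ hν
    ((addVal ℤ ℝ).map_mul_apply_nonneg hb₁.addVal_nonneg ha₂.addVal_nonneg) hU).mul_left
    ha₁.addVal_nonneg).mul_right hb₂.addVal_nonneg).mul_left ha₃.addVal_inv_nonneg).mul_right
    hb₃.addVal_inv_nonneg
  rw [← hρ] at hminors
  have hlast : ∑ i ∈ U, μ i + ∑ i ∈ U, ν i ≤ ∑ i ∈ U, ρ i := by
    exact_mod_cast le_sum_of_leMinors_diagonal_single hminors
  have hsplit (f : Fin m → ℤ) := sum_filter_add_sum_filter_not univ (fun i : Fin m => (i : ℕ) < k) f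
  linarith [hsplit μ, hsplit ν, hsplit ρ]

/-- Triangle inequality for the coweight-valued distance, in the dominance order:
if `g`, `h` and `g·h` have Cartan decompositions with dominant coweights `μ`, `ν`, `ρ`
respectively, then `∑ ρ = ∑ μ + ∑ ν` and every partial sum of `ρ` is at most the
corresponding partial sum of `μ + ν`; that is, `ρ ≤ μ + ν` in the dominance order. -/
theorem cartan_triangle_inequality {m : ℕ} (hm : 1 ≤ m)
    (g h : Matrix (Fin m) (Fin m) (LaurentSeries ℝ))
    (a₁ b₁ a₂ b₂ a₃ b₃ : Matrix (Fin m) (Fin m) (LaurentSeries ℝ))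
    (μ ν ρ : Fin m → ℤ)
    (ha₁ : a₁.memGLO) (hb₁ : b₁.memGLO) (ha₂ : a₂.memGLO) (hb₂ : b₂.memGLO)
    (ha₃ : a₃.memGLO) (hb₃ : b₃.memGLO)
    (hμ : Antitone μ) (hν : Antitone ν) (hρ : Antitone ρ)
    (hg : g = a₁ * Matrix.diagonal
            (fun i => (HahnSeries.single (μ i) (1 : ℝ) : LaurentSeries ℝ)) * b₁)
    (hh : h = a₂ * Matrix.diagonal
            (fun i => (HahnSeries.single (ν i) (1 : ℝ) : LaurentSeries ℝ)) * b₂)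
    (hgh : g * h = a₃ * Matrix.diagonal
            (fun i => (HahnSeries.single (ρ i) (1 : ℝ) : LaurentSeries ℝ)) * b₃) :
    (∑ i, ρ i = ∑ i, μ i + ∑ i, ν i) ∧
      ∀ k : ℕ, k ≤ m →
        ∑ i ∈ Finset.univ.filter (fun i : Fin m => (i : ℕ) < k), ρ i ≤
          ∑ i ∈ Finset.univ.filter (fun i : Fin m => (i : ℕ) < k), μ i +
            ∑ i ∈ Finset.univ.filter (fun i : Fin m => (i : ℕ) < k), ν i :=
  cartan_triangle_inequality_general g h a₁ b₁ a₂ b₂ a₃ b₃ μ ν ρ ha₁ hb₁ ha₂ hb₂ ha₃ hb₃ hμ hν hg hh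
    hgh
end

section
/- Let n ≥ 1 and let M be an n×n real matrix that is totally positive: for every 1 ≤ k ≤ n and all strictly monotone maps r, c : Fin k → Fin n, the minor det(M.submatrix r c) is strictly positive. Then the coefficients of the characteristic polynomial of M strictly alternate in sign: for every k < n, (−1)^{n−k} · (coefficient of X^k in charpoly(M)) > 0. (Equivalently, each elementary symmetric function of the eigenvalues, i.e. each sum of k×k principal minors, is strictly positive; this is the fact that the coefficients of the characteristic polynomial of a matrix in G(ℝ_{>0}) are positive expressions in its minors.) -/
/-!
Up to the sign `(-1)^(n-k)`, the coefficient of `X^k` in the characteristic polynomial is the sum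
of the principal minors of size `n - k`. Each of them is a minor with equal strictly increasing
row and column maps, hence positive, and for `k < n` the sum is nonempty.
-/

open Finset

namespace Matrix

variable {ι R : Type*} [LinearOrder ι]

theorem det_submatrix_subtype_val_eq_orderEmbOfFin [CommRing R] (M : Matrix ι ι R)
    (s : Finset ι) {k : ℕ} (hs : s.card = k) :
    (M.submatrix (Subtype.val : s → ι) Subtype.val).det =
      (M.submatrix (s.orderEmbOfFin hs) (s.orderEmbOfFin hs)).det := by
  rw [← det_submatrix_equiv_self (s.orderIsoOfFin hs).toEquiv, submatrix_submatrix]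
  rfl

theorem sum_principal_minors_pos [Fintype ι] [CommRing R] [LinearOrder R] [IsStrictOrderedRing R]
    (M : Matrix ι ι R) {k : ℕ} (hk : k ≤ Fintype.card ι)
    (hpos : ∀ r : Fin k → ι, StrictMono r → 0 < (M.submatrix r r).det) :
    0 < ∑ s ∈ univ.powersetCard k, (M.submatrix (Subtype.val : s → ι) Subtype.val).det := by
  refine sum_pos (fun s hs => ?_) (powersetCard_nonempty.mpr (by simpa using hk))
  rw [det_submatrix_subtype_val_eq_orderEmbOfFin M s (mem_powersetCard.mp hs).2]
  exact hpos _ (s.orderEmbOfFin _).strictMono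

end Matrix

theorem totally_positive_charpoly_alternating_general {n : ℕ}
    (M : Matrix (Fin n) (Fin n) ℝ)
    (htp : ∀ k : ℕ, 1 ≤ k → k ≤ n → ∀ r c : Fin k → Fin n,
      StrictMono r → StrictMono c → 0 < (M.submatrix r c).det) :
    ∀ k : ℕ, k < n → 0 < (-1 : ℝ) ^ (n - k) * M.charpoly.coeff k := by
  intro k hk
  have hcoeff := M.charpoly_coeff_eq_sum_minors (n - k) (by simp)
  rw [Fintype.card_fin, Nat.sub_sub_self hk.le] at hcoeff
  rw [hcoeff, ← mul_assoc, ← pow_add, Even.neg_one_pow ⟨_, rfl⟩, one_mul]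
  exact M.sum_principal_minors_pos (by simp)
    fun r hr => htp (n - k) (by omega) (by omega) r r hr hr

/-- For a totally positive real matrix (all minors strictly positive), the coefficients
of the characteristic polynomial strictly alternate in sign: for every `k < n`,
`(-1)^(n-k) · (charpoly M).coeff k > 0`. Equivalently, each sum of principal minors
(elementary symmetric function of the eigenvalues) is strictly positive. -/
theorem totally_positive_charpoly_alternating {n : ℕ} (hn : 1 ≤ n)
    (M : Matrix (Fin n) (Fin n) ℝ)
    (htp : ∀ k : ℕ, 1 ≤ k → k ≤ n → ∀ r c : Fin k → Fin n,
      StrictMono r → StrictMono c → 0 < (M.submatrix r c).det) :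
    ∀ k : ℕ, k < n → 0 < (-1 : ℝ) ^ (n - k) * M.charpoly.coeff k :=
  totally_positive_charpoly_alternating_general M htp
end
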